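/- arXiv:math/0210181 — 4 statements merged into one kernel-verified Lean document; each statement's English description precedes it below -/
import Mathlib

section
/- If x, y, z, w are symmetric 2×2 matrices over a commutative ring with trace(J·x·J·z·J·y) = 0, then trace(J·w·J·[x,y,z]·J·y) = det(y)·trace(J·w·J·x·J·z), where [x,y,z] = -x·J·z·J·y. Equivalently, in coordinate form, det(w, y, [x,y,z]) = det(y)·det(w, z, x). -/
/-! Since `J Mᵀ J = -adj M` for every `2 × 2` matrix, a symmetric `y` satisfies
`J y J y = -(det y) • 1`. The left-hand side ends in exactly this factor, so it collapses to
`det y` times the right-hand trace. -/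

open Matrix

def Jmat (A : Type*) [CommRing A] : Matrix (Fin 2) (Fin 2) A := !![0, 1; -1, 0]

theorem Jmat_mul_transpose_mul_Jmat {A : Type*} [CommRing A] (M : Matrix (Fin 2) (Fin 2) A) :
    Jmat A * Mᵀ * Jmat A = -adjugate M := by
  ext i j
  fin_cases i <;> fin_cases j <;>
    simp [Jmat, adjugate_fin_two, mul_apply, vecMul, dotProduct, Fin.sum_univ_two]

theorem Jmat_mul_transpose_mul_Jmat_mul {A : Type*} [CommRing A]
    (M : Matrix (Fin 2) (Fin 2) A) : Jmat A * Mᵀ * Jmat A * M = -(M.det • 1) := by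
  rw [Jmat_mul_transpose_mul_Jmat, Matrix.neg_mul, adjugate_mul]

theorem trace_bracket_identity_general {A : Type*} [CommRing A]
    (x y z w : Matrix (Fin 2) (Fin 2) A)
    (hy : y.IsSymm) :
    (Jmat A * w * Jmat A * (-(x * Jmat A * z * Jmat A * y)) * Jmat A * y).trace =
      y.det * (Jmat A * w * Jmat A * x * Jmat A * z).trace := by
  have hJyJy : Jmat A * y * Jmat A * y = -(y.det • 1) := by
    simpa only [hy.eq] using Jmat_mul_transpose_mul_Jmat_mul y
  calc _ = -(Jmat A * w * Jmat A * x * Jmat A * z * (Jmat A * y * Jmat A * y)).trace := by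
        simp only [Matrix.mul_neg, Matrix.neg_mul, trace_neg, Matrix.mul_assoc]
    _ = _ := by
        rw [hJyJy, Matrix.mul_neg, Matrix.mul_smul, Matrix.mul_one, trace_neg, trace_smul,
          neg_neg, smul_eq_mul]

theorem trace_bracket_identity {A : Type*} [CommRing A]
    (x y z w : Matrix (Fin 2) (Fin 2) A)
    (hx : x.IsSymm) (hy : y.IsSymm) (hz : z.IsSymm) (hw : w.IsSymm)
    (htr : (Jmat A * x * Jmat A * z * Jmat A * y).trace = 0) :
    (Jmat A * w * Jmat A * (-(x * Jmat A * z * Jmat A * y)) * Jmat A * y).trace =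
      y.det * (Jmat A * w * Jmat A * x * Jmat A * z).trace :=
  trace_bracket_identity_general x y z w hy
end

section
/- If x, y, z are symmetric 2×2 matrices over a commutative ring with det(x,y,z) = 0 (in the 3×3 determinant sense), then det(x, y, [x,y,z]) = 0 and [x, y, [x,y,z]] = det(x)·det(y)·z, where [a,b,c] = -a·J·c·J·b. -/
/-!
Since `-J m J = adj mᵀ` for 2×2 matrices, `[a,b,c] = a · adj c · b`, and the entries `(0,1)` and
`(1,0)` of this matrix differ by exactly `det(a,b,c)`. So `w = [x,y,z]` is symmetric, whence
`w = wᵀ = y · adj z · x` and `adj w = adj x · z · adj y`. Then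
`[x,y,w] = (x · adj x) · z · (adj y · y) = det x · det y · z`, which is symmetric again, so
`det(x,y,w) = 0`.
-/

open Matrix

def toMat {A : Type*} [CommRing A] (x : Fin 3 → A) : Matrix (Fin 2) (Fin 2) A :=
  !![x 0, x 1; x 1, x 2]

def ofMat {A : Type*} [CommRing A] (m : Matrix (Fin 2) (Fin 2) A) : Fin 3 → A :=
  ![m 0 0, m 0 1, m 1 1]

def det3 {A : Type*} [CommRing A] (x y z : Fin 3 → A) : A :=
  (!![x 0, x 1, x 2; y 0, y 1, y 2; z 0, z 1, z 2]).det

section TwoByTwo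

variable {A : Type*} [CommRing A]

theorem isSymm_fin_two_iff {α : Type*} {M : Matrix (Fin 2) (Fin 2) α} :
    M.IsSymm ↔ M 1 0 = M 0 1 := by
  simp [IsSymm.ext_iff, Fin.forall_fin_two, eq_comm]

theorem toMat_isSymm (x : Fin 3 → A) : (toMat x).IsSymm :=
  isSymm_fin_two_iff.2 rfl

theorem toMat_ofMat {M : Matrix (Fin 2) (Fin 2) A} (hM : M.IsSymm) : toMat (ofMat M) = M := by
  ext i j
  fin_cases i <;> fin_cases j <;> simp [toMat, ofMat, isSymm_fin_two_iff.1 hM]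

theorem neg_Jmat_mul_mul_Jmat (M : Matrix (Fin 2) (Fin 2) A) :
    -(Jmat A * M * Jmat A) = adjugate Mᵀ := by
  ext i j
  fin_cases i <;> fin_cases j <;>
    simp [Jmat, adjugate_fin_two, vecMul, dotProduct, mul_apply, Fin.sum_univ_two]

theorem neg_mul_Jmat_mul_mul_Jmat_mul (X Y : Matrix (Fin 2) (Fin 2) A)
    {Z : Matrix (Fin 2) (Fin 2) A} (hZ : Z.IsSymm) :
    -(X * Jmat A * Z * Jmat A * Y) = X * adjugate Z * Y := by
  rw [← hZ.eq, ← neg_Jmat_mul_mul_Jmat, hZ.eq]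
  noncomm_ring

theorem det3_eq_sub (a b c : Fin 3 → A) :
    det3 a b c = (toMat a * adjugate (toMat c) * toMat b) 0 1
      - (toMat a * adjugate (toMat c) * toMat b) 1 0 := by
  simp [det3, det_fin_three, toMat, adjugate_fin_two, mul_apply, Fin.sum_univ_two]
  ring

theorem det3_eq_zero_iff_isSymm (a b c : Fin 3 → A) :
    det3 a b c = 0 ↔ (toMat a * adjugate (toMat c) * toMat b).IsSymm := by
  rw [det3_eq_sub, sub_eq_zero, isSymm_fin_two_iff, eq_comm]

theorem mul_adjugate_mul_adjugate_mul_mul {X Y Z : Matrix (Fin 2) (Fin 2) A}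
    (hX : X.IsSymm) (hY : Y.IsSymm) (hZ : Z.IsSymm) (hW : (X * adjugate Z * Y).IsSymm) :
    X * adjugate (X * adjugate Z * Y) * Y = (X.det * Y.det) • Z := by
  have hW_comm : X * adjugate Z * Y = Y * adjugate Z * X := by
    rw [← hW.eq, transpose_mul, transpose_mul, adjugate_transpose, hX.eq, hY.eq, hZ.eq,
      Matrix.mul_assoc]
  have hadj : adjugate (adjugate Z) = Z := by simp [adjugate_adjugate']
  rw [hW_comm, adjugate_mul_distrib, adjugate_mul_distrib, hadj]
  calc X * (adjugate X * (Z * adjugate Y)) * Y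
      = (X * adjugate X) * Z * (adjugate Y * Y) := by noncomm_ring
    _ = (X.det * Y.det) • Z := by
      rw [mul_adjugate, adjugate_mul, smul_mul, Matrix.one_mul, Matrix.mul_smul, Matrix.mul_one,
        smul_smul, mul_comm]

end TwoByTwo

theorem bracket_self {A : Type*} [CommRing A] (x y z : Fin 3 → A)
    (h : det3 x y z = 0) :
    det3 x y (ofMat (-(toMat x * Jmat A * toMat z * Jmat A * toMat y))) = 0 ∧
      -(toMat x * Jmat A * (-(toMat x * Jmat A * toMat z * Jmat A * toMat y)) * Jmat A * toMat y)
        = ((toMat x).det * (toMat y).det) • toMat z := by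
  have hW := (det3_eq_zero_iff_isSymm x y z).1 h
  have hbracket := mul_adjugate_mul_adjugate_mul_mul (toMat_isSymm x) (toMat_isSymm y)
    (toMat_isSymm z) hW
  rw [neg_mul_Jmat_mul_mul_Jmat_mul _ _ (toMat_isSymm z), neg_mul_Jmat_mul_mul_Jmat_mul _ _ hW]
  refine ⟨?_, hbracket⟩
  rw [det3_eq_zero_iff_isSymm, toMat_ofMat hW, hbracket]
  exact (toMat_isSymm z).smul _
end

section
/- Let (w_i) be the Fibonacci sequence of words on the alphabet {a,b}: w₀ = b, w₁ = a, w_i = w_{i-1}w_{i-2} for i ≥ 2. For k ≥ 0 let m_k be the word w_{k+2} with its last two letters removed. Then m₀ is the empty word, m₁ = a, and for k ≥ 2, m_k = m_{k-1}·s·m_{k-2}, where s = ab if k is odd and s = ba if k is even. -/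
/-! The last two letters of `w (k + 2)` alternate between `ab` (for even `k`) and `ba` (for odd
`k`), since `w (k + 4) = w (k + 3) ++ w (k + 2)` ends like `w (k + 2)`. Writing
`w (k + 2) = m k ++ s k` for this suffix, `w (k + 4) = m (k + 1) ++ s (k + 1) ++ m k ++ s k`, and
removing the last two letters gives the recursion. -/

namespace FibonacciWord

variable {α : Type*}

/-- The last two letters of `w (k + 2)`. -/
def suffix (a b : α) (k : ℕ) : List α := if Odd k then [b, a] else [a, b]

lemma length_suffix (a b : α) (k : ℕ) : (suffix a b k).length = 2 := by
  unfold suffix; split_ifs <;> rfl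

lemma suffix_add_two (a b : α) (k : ℕ) : suffix a b (k + 2) = suffix a b k := by
  simp only [suffix, Nat.odd_add_one, not_not]

lemma suffix_add_one (a b : α) (k : ℕ) :
    suffix a b (k + 1) = if Odd (k + 2) then [a, b] else [b, a] := by
  by_cases h : Odd k <;> simp [suffix, Nat.odd_add_one, h]

lemma take_length_sub_suffix (a b : α) (u : List α) (k : ℕ) :
    (u ++ suffix a b k).take ((u ++ suffix a b k).length - 2) = u := by
  simp [length_suffix]

variable {a b : α} {w : ℕ → List α}

lemma exists_eq_append_suffix (hw0 : w 0 = [b]) (hw1 : w 1 = [a])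
    (hw : ∀ i, w (i + 2) = w (i + 1) ++ w i) (k : ℕ) :
    ∃ u, w (k + 2) = u ++ suffix a b k := by
  induction k using Nat.twoStepInduction with
  | zero => exact ⟨[], by simp [hw, hw0, hw1, suffix]⟩
  | one => exact ⟨[a], by simp [hw, hw0, hw1, suffix]⟩
  | more k ih _ =>
    obtain ⟨u, hu⟩ := ih
    exact ⟨w (k + 3) ++ u, by rw [hw (k + 2), hu, suffix_add_two, List.append_assoc]⟩

lemma eq_take_append_suffix (hw0 : w 0 = [b]) (hw1 : w 1 = [a])
    (hw : ∀ i, w (i + 2) = w (i + 1) ++ w i) (k : ℕ) :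
    w (k + 2) = (w (k + 2)).take ((w (k + 2)).length - 2) ++ suffix a b k := by
  obtain ⟨u, hu⟩ := exists_eq_append_suffix hw0 hw1 hw k
  rw [hu, take_length_sub_suffix]

end FibonacciWord

open FibonacciWord in
/-- Fibonacci words: `w 0 = [b]`, `w 1 = [a]`, `w (i+2) = w (i+1) ++ w i`; `m k` is
`w (k+2)` with its last two letters removed. -/
theorem fibonacci_word_truncation {α : Type*} (a b : α) (w m : ℕ → List α)
    (hw0 : w 0 = [b]) (hw1 : w 1 = [a]) (hw : ∀ i, w (i + 2) = w (i + 1) ++ w i)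
    (hm : ∀ k, m k = (w (k + 2)).take ((w (k + 2)).length - 2)) :
    m 0 = [] ∧ m 1 = [a] ∧
      ∀ k, m (k + 2) = m (k + 1) ++ (if Odd (k + 2) then [a, b] else [b, a]) ++ m k := by
  have hsplit (k : ℕ) : w (k + 2) = m k ++ suffix a b k := by
    rw [hm]; exact eq_take_append_suffix hw0 hw1 hw k
  refine ⟨by simp [hm, hw, hw0, hw1], by simp [hm, hw, hw0, hw1], fun k => ?_⟩
  calc m (k + 2)
      = (m (k + 1) ++ suffix a b (k + 1) ++ m k ++ suffix a b k).take
          ((m (k + 1) ++ suffix a b (k + 1) ++ m k ++ suffix a b k).length - 2) := by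
        rw [hm, hw, hsplit (k + 1), hsplit k, ← List.append_assoc]
    _ = m (k + 1) ++ (if Odd (k + 2) then [a, b] else [b, a]) ++ m k := by
        rw [take_length_sub_suffix, suffix_add_one]
end

section
/- Suppose ξ ∈ ℝ and there are constants c₁ > 0, 0 ≤ δ < 1, C > 0, γ = (1+√5)/2, and an increasing sequence of positive integers (Y_k) with Y_{k+1} ≤ C·Y_k^γ, together with integers y_k satisfying |y_k| ≤ Y_k, dist(y_kξ, ℤ) ≤ C·Y_k^{-1}, dist(y_kξ², ℤ) ≤ C·Y_k^{-1}, and dist(y_kξ³, ℤ) ≥ c₁·Y_k^{-δ} for all k. Then there exists c₂ > 0 such that every algebraic integer α ∈ ℂ of degree ≤ 3 satisfies |ξ - α| ≥ c₂·H(α)^{-θ}, where θ = (γ² + δ/γ)/(1 - δ). -/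
noncomputable def gam : ℝ := (1 + Real.sqrt 5) / 2

/-- Distance from a real number to the nearest integer. -/
noncomputable def distInt (x : ℝ) : ℝ := ⨅ n : ℤ, |x - (n : ℝ)|

section AuxLemmas

lemma sqrt5_sq : Real.sqrt 5 ^ 2 = 5 := Real.sq_sqrt (by norm_num)

lemma gam_ge : (3:ℝ)/2 ≤ gam := by
  have : (2:ℝ) ≤ Real.sqrt 5 := by
    rw [show (2:ℝ) = Real.sqrt 4 by rw [show (4:ℝ) = 2^2 by norm_num, Real.sqrt_sq]; norm_num]
    exact Real.sqrt_le_sqrt (by norm_num)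
  unfold gam; linarith

lemma gam_pos : 0 < gam := by linarith [gam_ge]

lemma gam_one_le : (1:ℝ) ≤ gam := by linarith [gam_ge]

lemma gam_sq : gam ^ 2 = gam + 1 := by
  unfold gam; nlinarith [sqrt5_sq]

lemma distInt_bdd (x : ℝ) : BddBelow (Set.range fun n : ℤ => |x - (n : ℝ)|) :=
  ⟨0, fun _ ⟨n, hn⟩ => hn ▸ abs_nonneg _⟩

lemma distInt_le (x : ℝ) (n : ℤ) : distInt x ≤ |x - (n : ℝ)| :=
  ciInf_le (distInt_bdd x) n

lemma distInt_nonneg (x : ℝ) : 0 ≤ distInt x :=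
  le_ciInf fun _ => abs_nonneg _

lemma round_min (x : ℝ) (n : ℤ) : |x - (round x : ℝ)| ≤ |x - (n : ℝ)| := by
  by_cases h : |x - (n : ℝ)| < 1/2
  · have : round x = n := by
      rw [round_eq]
      rw [abs_lt] at h
      refine Int.floor_eq_iff.mpr ⟨by push_cast; linarith, by push_cast; linarith⟩
    rw [this]
  · exact le_trans (abs_sub_round x) (not_lt.mp h)

lemma distInt_eq (x : ℝ) : distInt x = |x - (round x : ℝ)| :=
  le_antisymm (distInt_le x _) (le_ciInf fun n => round_min x n)

lemma distInt_le_abs (x : ℝ) : distInt x ≤ |x| := by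
  simpa using distInt_le x 0

lemma distInt_add (x z : ℝ) : distInt (x + z) ≤ distInt x + distInt z := by
  calc distInt (x + z) ≤ |x + z - ((round x + round z : ℤ) : ℝ)| := distInt_le _ _
    _ ≤ |x - round x| + |z - round z| := by
        push_cast
        have : x + z - ((round x : ℝ) + (round z : ℝ)) = (x - round x) + (z - round z) := by ring
        rw [this]; exact abs_add_le _ _
    _ = distInt x + distInt z := by rw [distInt_eq, distInt_eq]

lemma distInt_neg (x : ℝ) : distInt (-x) ≤ distInt x := by
  calc distInt (-x) ≤ |(-x) - ((-(round x) : ℤ) : ℝ)| := distInt_le _ _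
    _ = |x - round x| := by
        push_cast
        rw [show (-x) - (-(round x : ℝ)) = -(x - round x) by ring, abs_neg]
    _ = distInt x := (distInt_eq x).symm

lemma distInt_intCast (n : ℤ) : distInt (n : ℝ) = 0 :=
  le_antisymm (by simpa using distInt_le (n : ℝ) n) (distInt_nonneg _)

lemma distInt_intMul (n : ℤ) (x : ℝ) : distInt ((n : ℝ) * x) ≤ |(n : ℝ)| * distInt x := by
  calc distInt ((n : ℝ) * x) ≤ |(n : ℝ) * x - ((n * round x : ℤ) : ℝ)| := distInt_le _ _
    _ = |(n : ℝ)| * |x - round x| := by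
        push_cast
        rw [← abs_mul, show (n : ℝ) * x - (n : ℝ) * (round x : ℝ) = (n:ℝ) * (x - round x) by ring]
    _ = |(n : ℝ)| * distInt x := by rw [distInt_eq]

lemma distInt_lower (a b : ℝ) : distInt a ≤ distInt (a + b) + distInt b := by
  calc distInt a = distInt ((a + b) + (-b)) := by ring_nf
    _ ≤ distInt (a + b) + distInt (-b) := distInt_add _ _
    _ ≤ distInt (a + b) + distInt b := by linarith [distInt_neg b]

end AuxLemmas

set_option maxHeartbeats 2000000 in
theorem approx_cubic_integers (ξ : ℝ) (c₁ δ C : ℝ)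
    (hc₁ : 0 < c₁) (hδ0 : 0 ≤ δ) (hδ1 : δ < 1) (hC : 0 < C)
    (Y : ℕ → ℕ) (hY1 : ∀ k, 1 ≤ Y k) (hYmono : StrictMono Y)
    (hYgrowth : ∀ k, (Y (k + 1) : ℝ) ≤ C * (Y k : ℝ) ^ gam)
    (y : ℕ → ℤ) (hyY : ∀ k, |y k| ≤ (Y k : ℤ))
    (h1 : ∀ k, distInt ((y k : ℝ) * ξ) ≤ C / (Y k : ℝ))
    (h2 : ∀ k, distInt ((y k : ℝ) * ξ ^ 2) ≤ C / (Y k : ℝ))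
    (h3 : ∀ k, c₁ * (Y k : ℝ) ^ (-δ) ≤ distInt ((y k : ℝ) * ξ ^ 3)) :
    ∃ c₂ : ℝ, 0 < c₂ ∧ ∀ (P : Polynomial ℤ) (α : ℂ),
      P.Monic → P.natDegree ≤ 3 → Irreducible P → Polynomial.aeval α P = 0 →
      c₂ * (((Finset.range 4).sup fun i => (P.coeff i).natAbs : ℕ) : ℝ) ^
          (-((gam ^ 2 + δ / gam) / (1 - δ))) ≤ ‖(ξ : ℂ) - α‖ := by
  -- basic constants
  set M : ℝ := 1 + |ξ| with hMdef
  have hM1 : (1:ℝ) ≤ M := by have := abs_nonneg ξ; simp only [hMdef]; linarith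
  have hM0 : (0:ℝ) < M := by linarith
  set m : ℝ := M ^ 3 with hmdef
  have hm1 : (1:ℝ) ≤ m := one_le_pow₀ hM1
  have hm0 : (0:ℝ) < m := by linarith
  have hδne : (1:ℝ) - δ ≠ 0 := by intro h; linarith
  have hδpos : (0:ℝ) < 1 - δ := by linarith
  set e : ℝ := gam / (1 - δ) with hedef
  have he0 : 0 ≤ e := div_nonneg gam_pos.le hδpos.le
  set K : ℝ := max 1 (4 * C / c₁) with hKdef
  have hK1 : (1:ℝ) ≤ K := le_max_left _ _
  set B : ℝ := max (Y 0 : ℝ) (C * K ^ e) with hBdef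
  have hB1 : (1:ℝ) ≤ B := le_trans (by exact_mod_cast hY1 0) (le_max_left _ _)
  have hB0 : (0:ℝ) < B := by linarith
  set E : ℝ := e * (1 + δ) with hEdef
  have hE0 : 0 ≤ E := mul_nonneg he0 (by linarith)
  -- exponent identity
  have hθ : (gam ^ 2 + δ / gam) / (1 - δ) = E + 1 := by
    have hg : gam ≠ 0 := ne_of_gt gam_pos
    have hinv : δ / gam = δ * (gam - 1) := by
      rw [div_eq_iff hg]; linear_combination (-δ) * gam_sq
    rw [hEdef, hedef, hinv, gam_sq]
    field_simp
    ring
  set c₃ : ℝ := c₁ * B ^ (-(1 + δ)) / (2 * m) with hc₃def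
  have hc₃0 : 0 < c₃ := by
    apply div_pos (mul_pos hc₁ (Real.rpow_pos_of_pos hB0 _)) (by linarith)
  refine ⟨min 1 (c₃ / (6 * M ^ 2)), lt_min one_pos (div_pos hc₃0 (by positivity)), ?_⟩
  intro P α hmon hdeg hirr hroot
  -- height
  set Hn : ℕ := (Finset.range 4).sup fun i => (P.coeff i).natAbs with hHndef
  have hdlt : P.natDegree < 4 := by omega
  have hH1 : 1 ≤ Hn := by
    have h : (P.coeff P.natDegree).natAbs ≤ Hn :=
      Finset.le_sup (f := fun i => (P.coeff i).natAbs) (Finset.mem_range.mpr hdlt)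
    rwa [hmon.coeff_natDegree, Int.natAbs_one] at h
  set Hr : ℝ := (Hn : ℝ) with hHrdef
  have hHr1 : (1:ℝ) ≤ Hr := by rw [hHrdef]; exact_mod_cast hH1
  have hHr0 : (0:ℝ) < Hr := by linarith
  have hcoef : ∀ i, i < 4 → |(P.coeff i : ℝ)| ≤ Hr := by
    intro i hi
    have h : (P.coeff i).natAbs ≤ Hn :=
      Finset.le_sup (f := fun i => (P.coeff i).natAbs) (Finset.mem_range.mpr hi)
    rw [hHrdef]
    rw [show |(P.coeff i : ℝ)| = ((P.coeff i).natAbs : ℝ) by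
      rw [Nat.cast_natAbs, Int.cast_abs]]
    exact_mod_cast h
  have hdpos : 1 ≤ P.natDegree := by
    by_contra h
    have h0 : P.natDegree = 0 := by omega
    exact hirr.not_isUnit (by rw [hmon.natDegree_eq_zero.mp h0]; exact isUnit_one)
  -- the value p
  set p : ℝ := Polynomial.aeval ξ P with hpdef
  have hpsum : p = ∑ i ∈ Finset.range 4, (P.coeff i : ℝ) * ξ ^ i := by
    rw [hpdef, Polynomial.aeval_eq_sum_range' hdlt]
    simp [zsmul_eq_mul]
  have hpexp : p = (P.coeff 0 : ℝ) + (P.coeff 1 : ℝ) * ξ + (P.coeff 2 : ℝ) * ξ ^ 2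
      + (P.coeff 3 : ℝ) * ξ ^ 3 := by
    rw [hpsum]
    simp [Finset.sum_range_succ]
  -- Step A
  have stepA : ∀ k, c₁ * (Y k : ℝ) ^ (-δ) ≤
      (Y k : ℝ) * m * |p| + Hr * (C / (Y k : ℝ)) + Hr * (C / (Y k : ℝ)) := by
    intro k
    have hn1 : (1:ℝ) ≤ (Y k : ℝ) := by exact_mod_cast hY1 k
    have hn0 : (0:ℝ) < (Y k : ℝ) := by linarith
    have hCn0 : 0 ≤ C / (Y k : ℝ) := by positivity
    set yk : ℝ := ((y k : ℤ) : ℝ) with hykdef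
    have hyabs : |yk| ≤ (Y k : ℝ) := by
      rw [hykdef]; exact_mod_cast hyY k
    -- |u| bound for u = yk * ξ^(3-d) * p
    have habs : ∀ j : ℕ, j ≤ 3 → |yk * ξ ^ j * p| ≤ (Y k : ℝ) * m * |p| := by
      intro j hj
      rw [abs_mul, abs_mul, abs_pow]
      have h1' : |ξ| ^ j ≤ m := by
        calc |ξ| ^ j ≤ M ^ j := pow_le_pow_left₀ (abs_nonneg _) (by linarith) j
          _ ≤ M ^ 3 := pow_le_pow_right₀ hM1 hj
      have := mul_le_mul (mul_le_mul hyabs h1' (by positivity) hn0.le)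
        (le_refl |p|) (abs_nonneg p) (by positivity)
      exact this
    -- distInt bounds on the small terms
    have hsmall : ∀ i : ℕ, i < 4 → ∀ x : ℝ, distInt x ≤ C / (Y k : ℝ) →
        distInt ((P.coeff i : ℝ) * x) ≤ Hr * (C / (Y k : ℝ)) := by
      intro i hi x hx
      calc distInt ((P.coeff i : ℝ) * x) ≤ |(P.coeff i : ℝ)| * distInt x := distInt_intMul _ _
        _ ≤ Hr * (C / (Y k : ℝ)) :=
          mul_le_mul (hcoef i hi) hx (distInt_nonneg x) (by linarith)
    have key : distInt (yk * ξ ^ 3) ≤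
        (Y k : ℝ) * m * |p| + Hr * (C / (Y k : ℝ)) + Hr * (C / (Y k : ℝ)) := by
      rcases (by omega : P.natDegree = 1 ∨ P.natDegree = 2 ∨ P.natDegree = 3) with hd | hd | hd
      · -- degree 1 : u = yk ξ² p = yk ξ³ + a0 (yk ξ²)
        have ha1 : P.coeff 1 = 1 := by rw [← hd]; exact hmon.coeff_natDegree
        have ha2 : P.coeff 2 = 0 := Polynomial.coeff_eq_zero_of_natDegree_lt (by omega)
        have ha3 : P.coeff 3 = 0 := Polynomial.coeff_eq_zero_of_natDegree_lt (by omega)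
        have hid : yk * ξ ^ 3 + (P.coeff 0 : ℝ) * (yk * ξ ^ 2) = yk * ξ ^ 2 * p := by
          rw [hpexp, ha1, ha2, ha3]; push_cast; ring
        calc distInt (yk * ξ ^ 3)
            ≤ distInt (yk * ξ ^ 3 + (P.coeff 0 : ℝ) * (yk * ξ ^ 2))
              + distInt ((P.coeff 0 : ℝ) * (yk * ξ ^ 2)) := distInt_lower _ _
          _ ≤ |yk * ξ ^ 2 * p| + Hr * (C / (Y k : ℝ)) := by
              rw [hid]
              exact add_le_add (distInt_le_abs _) (hsmall 0 (by norm_num) _ (h2 k))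
          _ ≤ (Y k : ℝ) * m * |p| + Hr * (C / (Y k : ℝ)) + Hr * (C / (Y k : ℝ)) := by
              have := habs 2 (by norm_num)
              have h0 : 0 ≤ Hr * (C / (Y k : ℝ)) := by positivity
              linarith
      · -- degree 2 : u = yk ξ p = yk ξ³ + a1 (yk ξ²) + a0 (yk ξ)
        have ha2 : P.coeff 2 = 1 := by rw [← hd]; exact hmon.coeff_natDegree
        have ha3 : P.coeff 3 = 0 := Polynomial.coeff_eq_zero_of_natDegree_lt (by omega)
        have hid : yk * ξ ^ 3 + ((P.coeff 1 : ℝ) * (yk * ξ ^ 2) + (P.coeff 0 : ℝ) * (yk * ξ))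
            = yk * ξ ^ 1 * p := by
          rw [hpexp, ha2, ha3]; push_cast; ring
        calc distInt (yk * ξ ^ 3)
            ≤ distInt (yk * ξ ^ 3 +
                ((P.coeff 1 : ℝ) * (yk * ξ ^ 2) + (P.coeff 0 : ℝ) * (yk * ξ)))
              + distInt ((P.coeff 1 : ℝ) * (yk * ξ ^ 2) + (P.coeff 0 : ℝ) * (yk * ξ)) :=
              distInt_lower _ _
          _ ≤ |yk * ξ ^ 1 * p| + (distInt ((P.coeff 1 : ℝ) * (yk * ξ ^ 2))
              + distInt ((P.coeff 0 : ℝ) * (yk * ξ))) := by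
              rw [hid]
              exact add_le_add (distInt_le_abs _) (distInt_add _ _)
          _ ≤ (Y k : ℝ) * m * |p| + Hr * (C / (Y k : ℝ)) + Hr * (C / (Y k : ℝ)) := by
              have hb := habs 1 (by norm_num)
              have hs1 := hsmall 1 (by norm_num) _ (h2 k)
              have hs0 := hsmall 0 (by norm_num) _ (h1 k)
              linarith
      · -- degree 3 : u = yk p = yk ξ³ + a2 (yk ξ²) + a1 (yk ξ) + a0 yk
        have ha3 : P.coeff 3 = 1 := by rw [← hd]; exact hmon.coeff_natDegree
        have hid : yk * ξ ^ 3 + ((P.coeff 2 : ℝ) * (yk * ξ ^ 2)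
            + ((P.coeff 1 : ℝ) * (yk * ξ) + ((P.coeff 0 * y k : ℤ) : ℝ)))
            = yk * ξ ^ 0 * p := by
          rw [hpexp, ha3]; push_cast; ring
        calc distInt (yk * ξ ^ 3)
            ≤ distInt (yk * ξ ^ 3 + ((P.coeff 2 : ℝ) * (yk * ξ ^ 2)
                + ((P.coeff 1 : ℝ) * (yk * ξ) + ((P.coeff 0 * y k : ℤ) : ℝ))))
              + distInt ((P.coeff 2 : ℝ) * (yk * ξ ^ 2)
                + ((P.coeff 1 : ℝ) * (yk * ξ) + ((P.coeff 0 * y k : ℤ) : ℝ))) :=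
              distInt_lower _ _
          _ ≤ |yk * ξ ^ 0 * p| + (distInt ((P.coeff 2 : ℝ) * (yk * ξ ^ 2))
              + (distInt ((P.coeff 1 : ℝ) * (yk * ξ)) + distInt (((P.coeff 0 * y k : ℤ) : ℝ)))) := by
              rw [hid]
              exact add_le_add (distInt_le_abs _)
                (le_trans (distInt_add _ _) (add_le_add le_rfl (distInt_add _ _)))
          _ ≤ (Y k : ℝ) * m * |p| + Hr * (C / (Y k : ℝ)) + Hr * (C / (Y k : ℝ)) := by
              have hb := habs 0 (by norm_num)
              have hs2 := hsmall 2 (by norm_num) _ (h2 k)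
              have hs1 := hsmall 1 (by norm_num) _ (h1 k)
              have hz : distInt (((P.coeff 0 * y k : ℤ) : ℝ)) = 0 := distInt_intCast _
              linarith
    exact le_trans (h3 k) key
  -- Step B : choice of k
  set R : ℝ := max 1 (4 * C * Hr / c₁) with hRdef
  have hR1 : (1:ℝ) ≤ R := le_max_left _ _
  have hR0 : (0:ℝ) < R := by linarith
  set T : ℝ := R ^ ((1 - δ)⁻¹) with hTdef
  have hT0 : (0:ℝ) < T := Real.rpow_pos_of_pos hR0 _
  have hex : ∃ k, T ≤ (Y k : ℝ) := by
    obtain ⟨N, hN⟩ := exists_nat_ge T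
    exact ⟨N, le_trans hN (by exact_mod_cast hYmono.le_apply)⟩
  classical
  obtain ⟨k, hk, hmin⟩ : ∃ k, T ≤ (Y k : ℝ) ∧ ∀ j, j < k → (Y j : ℝ) < T := by
    refine ⟨Nat.find hex, Nat.find_spec hex, fun j hj => ?_⟩
    exact lt_of_not_ge (Nat.find_min hex hj)
  have hn1 : (1:ℝ) ≤ (Y k : ℝ) := by exact_mod_cast hY1 k
  have hn0 : (0:ℝ) < (Y k : ℝ) := by linarith
  have hT1δ : T ^ (1 - δ) = R := by
    rw [hTdef, ← Real.rpow_mul hR0.le, inv_mul_cancel₀ hδne, Real.rpow_one]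
  -- 4 C Hr ≤ c₁ Yk^{1-δ}
  have hYk1δ : 4 * C * Hr ≤ c₁ * (Y k : ℝ) ^ (1 - δ) := by
    have h' : R ≤ (Y k : ℝ) ^ (1 - δ) := by
      rw [← hT1δ]
      exact Real.rpow_le_rpow hT0.le hk hδpos.le
    have h'' : 4 * C * Hr / c₁ ≤ R := le_max_right _ _
    rw [div_le_iff₀ hc₁] at h''
    calc 4 * C * Hr ≤ R * c₁ := h''
      _ ≤ (Y k : ℝ) ^ (1 - δ) * c₁ := mul_le_mul_of_nonneg_right h' hc₁.le
      _ = c₁ * (Y k : ℝ) ^ (1 - δ) := by ring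
  -- Yk ≤ B * Hr^e
  have hHre1 : (1:ℝ) ≤ Hr ^ e := Real.one_le_rpow hHr1 he0
  have hYkB : (Y k : ℝ) ≤ B * Hr ^ e := by
    have hRKH : R ≤ K * Hr := by
      rw [hRdef]
      apply max_le
      · calc (1:ℝ) ≤ 1 * 1 := by norm_num
          _ ≤ K * Hr := mul_le_mul hK1 hHr1 one_pos.le (by linarith)
      · rw [div_le_iff₀ hc₁]
        have h4 : 4 * C / c₁ ≤ K := le_max_right _ _
        rw [div_le_iff₀ hc₁] at h4
        calc 4 * C * Hr ≤ (K * c₁) * Hr :=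
              mul_le_mul_of_nonneg_right h4 (by linarith)
          _ = K * Hr * c₁ := by ring
    rcases Nat.eq_zero_or_pos k with hk0 | hkpos
    · rw [hk0]
      calc (Y 0 : ℝ) ≤ B := le_max_left _ _
        _ = B * 1 := by ring
        _ ≤ B * Hr ^ e := mul_le_mul_of_nonneg_left hHre1 hB0.le
    · set j : ℕ := k - 1 with hjdef
      have hkk : j + 1 = k := by omega
      have hj : (Y j : ℝ) < T := hmin j (by omega)
      have hYj0 : (0:ℝ) ≤ (Y j : ℝ) := by positivity
      rw [← hkk]
      calc (Y (j+1) : ℝ) ≤ C * (Y j : ℝ) ^ gam := hYgrowth j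
        _ ≤ C * T ^ gam :=
            mul_le_mul_of_nonneg_left (Real.rpow_le_rpow hYj0 hj.le gam_pos.le) hC.le
        _ = C * R ^ ((1-δ)⁻¹ * gam) := by rw [hTdef, Real.rpow_mul hR0.le]
        _ ≤ C * (K * Hr) ^ ((1-δ)⁻¹ * gam) :=
            mul_le_mul_of_nonneg_left
              (Real.rpow_le_rpow hR0.le hRKH
                (mul_nonneg (inv_nonneg.mpr hδpos.le) gam_pos.le)) hC.le
        _ = C * (K ^ e * Hr ^ e) := by
            rw [Real.mul_rpow (by linarith : (0:ℝ) ≤ K) (by linarith : (0:ℝ) ≤ Hr)]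
            rw [hedef, div_eq_inv_mul]
        _ = (C * K ^ e) * Hr ^ e := by ring
        _ ≤ B * Hr ^ e :=
            mul_le_mul_of_nonneg_right (le_max_right _ _)
              (le_of_lt (Real.rpow_pos_of_pos hHr0 e))
  -- lower bound on |p|
  have hple : c₃ * Hr ^ (-E) ≤ |p| := by
    set t : ℝ := (Y k : ℝ) ^ (-δ) with htdef
    have ht0 : 0 < t := Real.rpow_pos_of_pos hn0 _
    have hsplit : (Y k : ℝ) ^ (1 - δ) = (Y k : ℝ) * t := by
      rw [htdef, show (1:ℝ) - δ = 1 + (-δ) by ring, Real.rpow_add hn0, Real.rpow_one]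
    have hsm : Hr * (C / (Y k : ℝ)) + Hr * (C / (Y k : ℝ)) ≤ c₁ * t / 2 := by
      rw [hsplit] at hYk1δ
      rw [show Hr * (C / (Y k : ℝ)) + Hr * (C / (Y k : ℝ)) = (2 * Hr * C) / (Y k : ℝ) by ring,
        div_le_div_iff₀ hn0 two_pos]
      calc 2 * Hr * C * 2 = 4 * C * Hr := by ring
        _ ≤ c₁ * ((Y k : ℝ) * t) := hYk1δ
        _ = c₁ * t * (Y k : ℝ) := by ring
    have hA := stepA k
    have hmain : c₁ * t / 2 ≤ (Y k : ℝ) * m * |p| := by linarith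
    -- |p| ≥ (c₁ t / 2) / (Yk m)
    have hp1 : c₁ / (2 * m) * (t / (Y k : ℝ)) ≤ |p| := by
      rw [show c₁ / (2 * m) * (t / (Y k : ℝ)) = (c₁ * t / 2) / (m * (Y k : ℝ)) by
        field_simp, div_le_iff₀ (by positivity : (0:ℝ) < m * (Y k : ℝ))]
      calc c₁ * t / 2 ≤ (Y k : ℝ) * m * |p| := hmain
        _ = |p| * (m * (Y k : ℝ)) := by ring
    have htY : t / (Y k : ℝ) = (Y k : ℝ) ^ (-(1 + δ)) := by
      rw [htdef, show -(1 + δ) = -δ + (-1) by ring, Real.rpow_add hn0, Real.rpow_neg_one,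
        div_eq_mul_inv]
    have hYE : B ^ (-(1 + δ)) * Hr ^ (-E) ≤ (Y k : ℝ) ^ (-(1 + δ)) := by
      have h1' : (B * Hr ^ e) ^ (-(1 + δ)) ≤ (Y k : ℝ) ^ (-(1 + δ)) :=
        Real.rpow_le_rpow_of_nonpos hn0 hYkB (by linarith)
      calc B ^ (-(1 + δ)) * Hr ^ (-E)
          = (B * Hr ^ e) ^ (-(1 + δ)) := by
            rw [Real.mul_rpow hB0.le (le_of_lt (Real.rpow_pos_of_pos hHr0 e)),
              ← Real.rpow_mul hHr0.le,
              show e * (-(1 + δ)) = -E from by rw [hEdef]; ring]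
        _ ≤ (Y k : ℝ) ^ (-(1 + δ)) := h1'
    calc c₃ * Hr ^ (-E) = c₁ / (2 * m) * (B ^ (-(1 + δ)) * Hr ^ (-E)) := by
          rw [hc₃def]; ring
      _ ≤ c₁ / (2 * m) * ((Y k : ℝ) ^ (-(1 + δ))) := by
          have h0 : 0 ≤ c₁ / (2 * m) := by positivity
          exact mul_le_mul_of_nonneg_left hYE h0
      _ = c₁ / (2 * m) * (t / (Y k : ℝ)) := by rw [htY]
      _ ≤ |p| := hp1
  -- Step C : complex factorization
  rw [hθ]
  have hHE : Hr ^ (-(E+1)) = Hr ^ (-E) / Hr := by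
    rw [show -(E+1) = -E + (-1) by ring, Real.rpow_add hHr0, Real.rpow_neg_one, div_eq_mul_inv]
  by_cases hclose : ‖(ξ:ℂ) - α‖ ≤ 1
  · -- close case
    have hroot4 : ∑ i ∈ Finset.range 4, (P.coeff i : ℂ) * α ^ i = 0 := by
      have h := (Polynomial.aeval_eq_sum_range' (R := ℤ) hdlt α).symm
      rw [hroot] at h
      rw [← h]
      apply Finset.sum_congr rfl
      intro i _
      rw [zsmul_eq_mul]
    have hpc : ((p : ℝ) : ℂ) = ∑ i ∈ Finset.range 4, (P.coeff i : ℂ) * ((ξ:ℝ):ℂ) ^ i := by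
      rw [hpsum]
      push_cast
      rfl
    set q : ℂ := (P.coeff 1 : ℂ) + (P.coeff 2 : ℂ) * (((ξ:ℝ):ℂ) + α)
      + (P.coeff 3 : ℂ) * (((ξ:ℝ):ℂ)^2 + ((ξ:ℝ):ℂ)*α + α^2) with hqdef
    have hfac : ((p : ℝ) : ℂ) = (((ξ:ℝ):ℂ) - α) * q := by
      rw [hpc, hqdef]
      simp only [Finset.sum_range_succ, Finset.sum_range_zero] at hroot4 ⊢
      linear_combination hroot4
    have hxiabs : ‖((ξ:ℝ):ℂ)‖ ≤ M := by
      rw [Complex.norm_real, Real.norm_eq_abs]; linarith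
    have hα : ‖α‖ ≤ M := by
      calc ‖α‖ = ‖(α - ((ξ:ℝ):ℂ)) + ((ξ:ℝ):ℂ)‖ := by ring_nf
        _ ≤ ‖α - ((ξ:ℝ):ℂ)‖ + ‖((ξ:ℝ):ℂ)‖ := norm_add_le _ _
        _ = ‖((ξ:ℝ):ℂ) - α‖ + ‖((ξ:ℝ):ℂ)‖ := by
            rw [norm_sub_rev]
        _ ≤ 1 + |ξ| := add_le_add hclose (by rw [Complex.norm_real, Real.norm_eq_abs])
        _ = M := hMdef.symm
    have hcoefC : ∀ i, i < 4 → ‖(P.coeff i : ℂ)‖ ≤ Hr := by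
      intro i hi
      rw [show ((P.coeff i : ℤ):ℂ) = (((P.coeff i : ℝ)):ℂ) by push_cast; rfl,
        Complex.norm_real, Real.norm_eq_abs]
      exact hcoef i hi
    have hq : ‖q‖ ≤ 6 * Hr * M^2 := by
      have t1 : ‖(P.coeff 2 : ℂ) * (((ξ:ℝ):ℂ) + α)‖ ≤ Hr * (2*M) := by
        rw [norm_mul]
        refine mul_le_mul (hcoefC 2 (by norm_num)) ?_ (norm_nonneg _) (by linarith)
        calc ‖((ξ:ℝ):ℂ) + α‖ ≤ ‖((ξ:ℝ):ℂ)‖ + ‖α‖ :=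
              norm_add_le _ _
          _ ≤ 2*M := by linarith
      have t2 : ‖(P.coeff 3 : ℂ) * (((ξ:ℝ):ℂ)^2 + ((ξ:ℝ):ℂ)*α + α^2)‖
          ≤ Hr * (3*M^2) := by
        rw [norm_mul]
        refine mul_le_mul (hcoefC 3 (by norm_num)) ?_ (norm_nonneg _) (by linarith)
        have e1 : ‖((ξ:ℝ):ℂ)^2‖ ≤ M^2 := by
          rw [norm_pow]; exact pow_le_pow_left₀ (norm_nonneg _) hxiabs 2
        have e2 : ‖((ξ:ℝ):ℂ)*α‖ ≤ M^2 := by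
          rw [norm_mul, sq]
          exact mul_le_mul hxiabs hα (norm_nonneg _) (by linarith)
        have e3 : ‖α^2‖ ≤ M^2 := by
          rw [norm_pow]; exact pow_le_pow_left₀ (norm_nonneg _) hα 2
        calc ‖((ξ:ℝ):ℂ)^2 + ((ξ:ℝ):ℂ)*α + α^2‖
            ≤ ‖((ξ:ℝ):ℂ)^2 + ((ξ:ℝ):ℂ)*α‖ + ‖α^2‖ :=
              norm_add_le _ _
          _ ≤ ‖((ξ:ℝ):ℂ)^2‖ + ‖((ξ:ℝ):ℂ)*α‖ + ‖α^2‖ := by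
              linarith [norm_add_le (((ξ:ℝ):ℂ)^2) (((ξ:ℝ):ℂ)*α)]
          _ ≤ 3*M^2 := by linarith
      have t0 : ‖(P.coeff 1 : ℂ)‖ ≤ Hr := hcoefC 1 (by norm_num)
      have hM2 : (1:ℝ) ≤ M^2 := one_le_pow₀ hM1
      have hMM2 : M ≤ M^2 := by
        calc M = 1 * M := (one_mul M).symm
          _ ≤ M * M := mul_le_mul_of_nonneg_right hM1 (by linarith)
          _ = M^2 := (sq M).symm
      calc ‖q‖ ≤ ‖(P.coeff 1 : ℂ) + (P.coeff 2 : ℂ) * (((ξ:ℝ):ℂ) + α)‖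
            + ‖(P.coeff 3 : ℂ) * (((ξ:ℝ):ℂ)^2 + ((ξ:ℝ):ℂ)*α + α^2)‖ :=
            norm_add_le _ _
        _ ≤ ‖(P.coeff 1 : ℂ)‖ + ‖(P.coeff 2 : ℂ) * (((ξ:ℝ):ℂ) + α)‖
            + ‖(P.coeff 3 : ℂ) * (((ξ:ℝ):ℂ)^2 + ((ξ:ℝ):ℂ)*α + α^2)‖ := by
            linarith [norm_add_le ((P.coeff 1 : ℂ)) ((P.coeff 2 : ℂ) * (((ξ:ℝ):ℂ) + α))]
        _ ≤ Hr + Hr * (2*M) + Hr * (3*M^2) := by linarith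
        _ ≤ 6 * Hr * M^2 := by
            have b1 : Hr * 1 ≤ Hr * M^2 := mul_le_mul_of_nonneg_left hM2 (by linarith)
            have b2 : Hr * (2*M) ≤ Hr * (2*M^2) :=
              mul_le_mul_of_nonneg_left (by linarith) (by linarith)
            linarith [b1, b2]
    have habsp : |p| ≤ ‖((ξ:ℝ):ℂ) - α‖ * (6*Hr*M^2) := by
      rw [← Real.norm_eq_abs, ← Complex.norm_real, hfac, norm_mul]
      exact mul_le_mul_of_nonneg_left hq (norm_nonneg _)
    have h6 : (0:ℝ) < 6*Hr*M^2 := by positivity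
    calc min 1 (c₃ / (6 * M ^ 2)) * Hr ^ (-(E+1))
        ≤ (c₃ / (6 * M ^ 2)) * (Hr ^ (-E) / Hr) := by
          rw [hHE]
          exact mul_le_mul_of_nonneg_right (min_le_right _ _) (by positivity)
      _ = (c₃ * Hr ^ (-E)) / (6*Hr*M^2) := by
          field_simp
      _ ≤ |p| / (6*Hr*M^2) := (div_le_div_iff_of_pos_right h6).mpr hple
      _ ≤ ‖((ξ:ℝ):ℂ) - α‖ := by
          rw [div_le_iff₀ h6]
          exact habsp
  · push_neg at hclose
    have hE1 : -(E+1) ≤ 0 := by linarith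
    calc min 1 (c₃ / (6 * M ^ 2)) * Hr ^ (-(E+1)) ≤ 1 * 1 := by
          refine mul_le_mul (min_le_left _ _) ?_ ?_ one_pos.le
          · exact Real.rpow_le_one_of_one_le_of_nonpos hHr1 hE1
          · positivity
      _ ≤ ‖((ξ:ℝ):ℂ) - α‖ := by rw [one_mul]; exact hclose.le
end
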